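/- Flatness of Chern's metric: let U ⊆ ℂ be open, let (f, g) be Weierstrass data on U with moreover g(z) ≠ 0 for every z ∈ U, and set 1 + N_V(z) = 2|g(z)|²/(1 + |g(z)|²) (the angle function for V = (0, 0, 1) shifted by 1). Then the function z ↦ ln((1 + N_V(z)) λ(z)) is harmonic on U, i.e. Δ(ln((1 + N_V) λ)) = 0 on U. (Since the Gauss curvature of a conformal metric μ²(dx² + dy²) is −μ⁻²Δ ln μ, this says that Chern's conformally changed metric 𝒢_Chern = (1 + N_V)² λ²(dx² + dy²) is flat.) -/

import Mathlib

/-! The conformal factor simplifies to `(1 + N_V) λ = |f g²|`, and `f g²` is holomorphic and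
zero-free on `U`, so `ln((1 + N_V) λ)` is locally the real part of a holomorphic logarithm. -/

/-- The flat Laplacian `Δ = ∂²/∂x² + ∂²/∂y²` on `ℂ ≃ ℝ²`, where the `x`-direction
is `1 : ℂ` and the `y`-direction is `I : ℂ`. -/
noncomputable def flatLaplacian (F : ℂ → ℝ) (z : ℂ) : ℝ :=
  fderiv ℝ (fun w => fderiv ℝ F w 1) z 1 +
    fderiv ℝ (fun w => fderiv ℝ F w Complex.I) z Complex.I

open InnerProductSpace Laplacian

theorem fderiv_fderiv_apply_const {𝕜 E G : Type*} [NontriviallyNormedField 𝕜]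
    [NormedAddCommGroup E] [NormedSpace 𝕜 E] [NormedAddCommGroup G] [NormedSpace 𝕜 G]
    {F : E → G} {z : E} (hF : DifferentiableAt 𝕜 (fderiv 𝕜 F) z) (u v : E) :
    fderiv 𝕜 (fun w => fderiv 𝕜 F w v) z u = fderiv 𝕜 (fderiv 𝕜 F) z u v := by
  rw [fderiv_clm_apply hF (differentiableAt_const v)]
  simp

theorem ContDiffAt.flatLaplacian_eq_laplacian {F : ℂ → ℝ} {z : ℂ} (hF : ContDiffAt ℝ 2 F z) :
    flatLaplacian F z = Δ F z := by
  simp only [flatLaplacian, laplacian_eq_iteratedFDeriv_complexPlane, iteratedFDeriv_two_apply,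
    fderiv_fderiv_apply_const (hF.fderiv_right (m := 1) le_rfl |>.differentiableAt one_ne_zero)]
  rfl

theorem InnerProductSpace.HarmonicAt.flatLaplacian_eq_zero {F : ℂ → ℝ} {z : ℂ}
    (hF : HarmonicAt F z) :
    flatLaplacian F z = 0 := by
  rw [hF.1.flatLaplacian_eq_laplacian]
  exact hF.2.self_of_nhds

theorem chern_metric_flat_general
    (U : Set ℂ) (hU : IsOpen U)
    (f g : ℂ → ℂ)
    (hf : DifferentiableOn ℂ f U) (hg : DifferentiableOn ℂ g U)
    (hf0 : ∀ z ∈ U, f z ≠ 0)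
    (hg0 : ∀ z ∈ U, g z ≠ 0)
    (lam onePlusNv : ℂ → ℝ)
    (hlam : ∀ z, lam z = ‖f z‖ * (1 + ‖g z‖ ^ 2) / 2)
    (hNv : ∀ z, onePlusNv z = 2 * ‖g z‖ ^ 2 / (1 + ‖g z‖ ^ 2)) :
    ∀ z ∈ U,
      flatLaplacian (fun w => Real.log (onePlusNv w * lam w)) z = 0 := by
  intro z hz
  have h_norm : ∀ w, onePlusNv w * lam w = ‖f w * g w ^ 2‖ := by
    intro w
    have : (0 : ℝ) < 1 + ‖g w‖ ^ 2 := by positivity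
    rw [hNv, hlam, norm_mul, norm_pow]
    field_simp
  have h_analytic : AnalyticAt ℂ (fun w => f w * g w ^ 2) z :=
    (hf.mul (hg.pow 2)).analyticAt (hU.mem_nhds hz)
  simp only [h_norm]
  exact (h_analytic.harmonicAt_log_norm (mul_ne_zero (hf0 z hz) (pow_ne_zero 2 (hg0 z hz))))
    |>.flatLaplacian_eq_zero

/-- Flatness of Chern's metric: for Weierstrass data `(f, g)` on an
open set `U ⊆ ℂ` with moreover `g ≠ 0` on `U`, with `λ = |f|(1 + |g|²)/2` and
`1 + N_V = 2|g|²/(1 + |g|²)` (the angle function for `V = (0,0,1)` shifted by 1),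
the function `z ↦ ln((1 + N_V(z)) λ(z))` is harmonic on `U`:
`Δ(ln((1 + N_V) λ)) = 0` on `U`.  This says that Chern's conformally changed
metric `𝒢_Chern = (1 + N_V)² λ²(dx² + dy²)` is flat. -/
theorem chern_metric_flat
    (U : Set ℂ) (hU : IsOpen U)
    (f g : ℂ → ℂ)
    (hf : DifferentiableOn ℂ f U) (hg : DifferentiableOn ℂ g U)
    (hf0 : ∀ z ∈ U, f z ≠ 0) (hg' : ∀ z ∈ U, deriv g z ≠ 0)
    (hg0 : ∀ z ∈ U, g z ≠ 0)
    (lam onePlusNv : ℂ → ℝ)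
    (hlam : ∀ z, lam z = ‖f z‖ * (1 + ‖g z‖ ^ 2) / 2)
    (hNv : ∀ z, onePlusNv z = 2 * ‖g z‖ ^ 2 / (1 + ‖g z‖ ^ 2)) :
    ∀ z ∈ U,
      flatLaplacian (fun w => Real.log (onePlusNv w * lam w)) z = 0 :=
  chern_metric_flat_general U hU f g hf hg hf0 hg0 lam onePlusNv hlam hNv
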